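/- Energy identity for the power system (testing the HJB equation with m and the Fokker–Planck equation with u): if (u, m, H̄) is a classical solution of the power-type ergodic MFG system, then H̄ = ∫_Q [ ½(|P|² − |∇u|²) m − α^q m^{q+1} − v m ] dy. -/

import Mathlib

open MeasureTheory Real

/-- Partial derivative in direction `i`. -/
noncomputable def pd {n : ℕ} (i : Fin n) (f : (Fin n → ℝ) → ℝ) (x : Fin n → ℝ) : ℝ :=
  fderiv ℝ f x (Pi.single i 1)

/-- Laplacian: sum of second partial derivatives. -/
noncomputable def lap {n : ℕ} (f : (Fin n → ℝ) → ℝ) (x : Fin n → ℝ) : ℝ :=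
  ∑ i, pd i (pd i f) x

/-- Divergence of a vector field. -/
noncomputable def dvg {n : ℕ} (F : (Fin n → ℝ) → Fin n → ℝ) (x : Fin n → ℝ) : ℝ :=
  ∑ i, pd i (fun y => F y i) x

/-- `ℤⁿ`-periodicity. -/
def ZPeriodic {n : ℕ} (f : (Fin n → ℝ) → ℝ) : Prop :=
  ∀ (k : Fin n → ℤ) (x : Fin n → ℝ), f (x + fun i => (k i : ℝ)) = f x

/-- The unit cube `Q = [0,1]ⁿ`. -/
def unitCube (n : ℕ) : Set (Fin n → ℝ) := Set.Icc 0 1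

/-- A classical solution `(u, m, H)` of the power-type ergodic MFG system
`-Δu + ½|∇u+P|² - v - αᑫ mᑫ = H`, `-Δm - div(m(∇u+P)) = 0`, `∫ u = 0`, `∫ m = 1`. -/
structure PowerMFG {n : ℕ} (v : (Fin n → ℝ) → ℝ) (P : Fin n → ℝ) (α q : ℝ)
    (u m : (Fin n → ℝ) → ℝ) (H : ℝ) : Prop where
  hu : ContDiff ℝ 2 u
  hm : ContDiff ℝ 2 m
  hup : ZPeriodic u
  hmp : ZPeriodic m
  hmpos : ∀ x, 0 < m x
  hHJB : ∀ x, -lap u x + (∑ i, (pd i u x + P i) ^ 2) / 2 - v x - α ^ q * (m x) ^ q = H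
  hFP : ∀ x, -lap m x - dvg (fun y j => m y * (pd j u y + P j)) x = 0
  humean : (∫ y in unitCube n, u y) = 0
  hmmean : (∫ y in unitCube n, m y) = 1

/-!
Multiply the HJB equation by `m`. Using the Fokker–Planck equation multiplied by `u`, the
difference between `H m` and the integrand is, pointwise, the divergence of the vector field
`u (∇m + m (∇u + P)) - m ∇u`. This field is `ℤⁿ`-periodic, so its fluxes through opposite faces
of `Q` cancel and, by the divergence theorem, its divergence integrates to zero over `Q`;
since `∫ m = 1`, what remains is the formula for `H`.
-/

section PartialDerivatives

variable {n : ℕ} {f g : (Fin n → ℝ) → ℝ} {x : Fin n → ℝ}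

lemma contDiff_pd {k : WithTop ℕ∞} (hf : ContDiff ℝ (k + 1) f) (i : Fin n) :
    ContDiff ℝ k (pd i f) :=
  (hf.fderiv_right le_rfl).clm_apply contDiff_const

lemma continuous_pd {k : WithTop ℕ∞} (hf : ContDiff ℝ k f) (hk : k ≠ 0) (i : Fin n) :
    Continuous (pd i f) :=
  (hf.continuous_fderiv hk).clm_apply continuous_const

lemma ZPeriodic.pd (hf : ZPeriodic f) (i : Fin n) : ZPeriodic (pd i f) := by
  intro k x
  have hshift : (fun y => f (y + fun j => (k j : ℝ))) = f := funext (hf k)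
  simp only [_root_.pd, ← fderiv_comp_add_right, hshift]

lemma pd_sub (hf : DifferentiableAt ℝ f x) (hg : DifferentiableAt ℝ g x) (i : Fin n) :
    pd i (fun y => f y - g y) x = pd i f x - pd i g x := by
  simp [pd, fderiv_fun_sub hf hg]

lemma pd_add (hf : DifferentiableAt ℝ f x) (hg : DifferentiableAt ℝ g x) (i : Fin n) :
    pd i (fun y => f y + g y) x = pd i f x + pd i g x := by
  simp [pd, fderiv_fun_add hf hg]

lemma pd_mul (hf : DifferentiableAt ℝ f x) (hg : DifferentiableAt ℝ g x) (i : Fin n) :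
    pd i (fun y => f y * g y) x = pd i f x * g x + f x * pd i g x := by
  simp only [pd, fderiv_fun_mul hf hg, add_apply, smul_apply, smul_eq_mul]
  ring

lemma pd_add_const (c : ℝ) (i : Fin n) : pd i (fun y => f y + c) x = pd i f x := by
  simp [pd, fderiv_add_const]

end PartialDerivatives

lemma integral_unitCube_sum_pd_eq_zero {n : ℕ} {g : Fin n → (Fin n → ℝ) → ℝ}
    (hg : ∀ i, ContDiff ℝ 1 (g i)) (hper : ∀ i, ZPeriodic (g i)) :
    ∫ x in unitCube n, ∑ i, pd i (g i) x = 0 := by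
  cases n with
  | zero => simp
  | succ N =>
    have hcont : Continuous fun x => ∑ i, pd i (g i) x :=
      continuous_finsetSum _ fun i _ => continuous_pd (hg i) one_ne_zero i
    change ∫ x in Set.Icc 0 1, ∑ i, fderiv ℝ (g i) x (Pi.single i 1) = 0
    rw [integral_divergence_of_hasFDerivAt_off_countable' 0 1 (fun _ => zero_le_one) g
      (fun i x => fderiv ℝ (g i) x) ∅ Set.countable_empty (fun i => (hg i).continuous.continuousOn)
      (fun x _ i => ((hg i).differentiable one_ne_zero x).hasFDerivAt) hcont.integrableOn_Icc]
    refine Finset.sum_eq_zero fun i _ => sub_eq_zero.2 <| setIntegral_congr_fun measurableSet_Icc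
      fun x _ => ?_
    have hface : Fin.insertNth i ((1 : Fin (N + 1) → ℝ) i) x
        = Fin.insertNth i ((0 : Fin (N + 1) → ℝ) i) x
          + fun j => (((Pi.single i 1 : Fin (N + 1) → ℤ) j : ℝ)) := by
      funext j
      rcases eq_or_ne j i with rfl | hji
      · simp
      · obtain ⟨j', rfl⟩ := Fin.exists_succAbove_eq hji
        simp [Fin.insertNth_apply_succAbove, Pi.single_apply, Fin.succAbove_ne i j']
    rw [hface, hper i]

noncomputable def energyFlux {n : ℕ} (u m : (Fin n → ℝ) → ℝ) (P : Fin n → ℝ) (i : Fin n)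
    (y : Fin n → ℝ) : ℝ :=
  u y * (pd i m y + m y * (pd i u y + P i)) - m y * pd i u y

section EnergyFlux

variable {n : ℕ} {u m : (Fin n → ℝ) → ℝ} (P : Fin n → ℝ)

lemma contDiff_energyFlux (hu : ContDiff ℝ 2 u) (hm : ContDiff ℝ 2 m) (i : Fin n) :
    ContDiff ℝ 1 (energyFlux u m P i) :=
  ((hu.of_le one_le_two).mul ((contDiff_pd hm i).add ((hm.of_le one_le_two).mul
    ((contDiff_pd hu i).add contDiff_const)))).sub ((hm.of_le one_le_two).mul (contDiff_pd hu i))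

lemma ZPeriodic.energyFlux (hu : ZPeriodic u) (hm : ZPeriodic m) (i : Fin n) :
    ZPeriodic (energyFlux u m P i) := by
  intro k x
  simp only [_root_.energyFlux, hu k x, hm k x, hu.pd i k x, hm.pd i k x]

lemma pd_energyFlux (hu : ContDiff ℝ 2 u) (hm : ContDiff ℝ 2 m) (i : Fin n) (y : Fin n → ℝ) :
    pd i (energyFlux u m P i) y
      = m y * (pd i u y * (pd i u y + P i)) - m y * pd i (pd i u) y
        + u y * (pd i (pd i m) y + pd i (fun z => m z * (pd i u z + P i)) y) := by
  have du : DifferentiableAt ℝ u y := hu.differentiable two_ne_zero y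
  have dm : DifferentiableAt ℝ m y := hm.differentiable two_ne_zero y
  have dpu : DifferentiableAt ℝ (pd i u) y := (contDiff_pd hu i).differentiable one_ne_zero y
  have dpm : DifferentiableAt ℝ (pd i m) y := (contDiff_pd hm i).differentiable one_ne_zero y
  have dJ : DifferentiableAt ℝ (fun z => m z * (pd i u z + P i)) y := dm.fun_mul (dpu.add_const _)
  unfold energyFlux
  rw [pd_sub (du.fun_mul (dpm.fun_add dJ)) (dm.fun_mul dpu), pd_mul du (dpm.fun_add dJ),
    pd_add dpm dJ, pd_mul dm dpu]
  ring

lemma sum_pd_energyFlux (hu : ContDiff ℝ 2 u) (hm : ContDiff ℝ 2 m) (y : Fin n → ℝ) :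
    ∑ i, pd i (energyFlux u m P i) y
      = m y * ∑ i, pd i u y * (pd i u y + P i) - m y * lap u y
        + u y * (lap m y + dvg (fun z j => m z * (pd j u z + P j)) y) := by
  simp only [pd_energyFlux P hu hm, Finset.sum_add_distrib, Finset.sum_sub_distrib,
    ← Finset.mul_sum, lap, dvg]

end EnergyFlux

lemma PowerMFG.energy_density_eq {n : ℕ} {v : (Fin n → ℝ) → ℝ} {P : Fin n → ℝ} {α q : ℝ}
    {u m : (Fin n → ℝ) → ℝ} {H : ℝ} (h : PowerMFG v P α q u m H) (y : Fin n → ℝ) :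
    ((∑ i, (P i) ^ 2) - ∑ i, (pd i u y) ^ 2) / 2 * m y - α ^ q * (m y) ^ (q + 1) - v y * m y
      = H * m y - ∑ i, pd i (energyFlux u m P i) y := by
  have hFP : lap m y + dvg (fun z j => m z * (pd j u z + P j)) y = 0 := by linarith [h.hFP y]
  have hsq : ∑ i, (pd i u y + P i) ^ 2
      = (∑ i, (P i) ^ 2) - ∑ i, (pd i u y) ^ 2 + 2 * ∑ i, pd i u y * (pd i u y + P i) := by
    rw [Finset.mul_sum, ← Finset.sum_sub_distrib, ← Finset.sum_add_distrib]
    exact Finset.sum_congr rfl fun i _ => by ring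
  rw [sum_pd_energyFlux P h.hu h.hm, hFP, ← h.hHJB y, hsq, rpow_add_one (h.hmpos y).ne']
  ring

theorem power_mfg_energy_identity_general {n : ℕ} (v : (Fin n → ℝ) → ℝ) (P : Fin n → ℝ) (α q : ℝ)
    (u m : (Fin n → ℝ) → ℝ) (H : ℝ)
    (h : PowerMFG v P α q u m H) :
    H = ∫ y in unitCube n,
      (((∑ i, (P i) ^ 2) - ∑ i, (pd i u y) ^ 2) / 2 * m y
        - α ^ q * (m y) ^ (q + 1) - v y * m y) := by
  have hflux := contDiff_energyFlux P h.hu h.hm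
  have hdiv : Continuous fun y => ∑ i, pd i (energyFlux u m P i) y :=
    continuous_finsetSum _ fun i _ => continuous_pd (hflux i) one_ne_zero i
  have hm_int : IntegrableOn (fun y => H * m y) (unitCube n) :=
    h.hm.continuous.integrableOn_Icc.const_mul H
  rw [integral_congr_ae (ae_of_all _ h.energy_density_eq),
    integral_sub hm_int hdiv.integrableOn_Icc,
    integral_const_mul, h.hmmean,
    integral_unitCube_sum_pd_eq_zero hflux (h.hup.energyFlux P h.hmp)]
  ring

/-- Energy identity for the power system. -/
theorem power_mfg_energy_identity {n : ℕ} (hn : 1 ≤ n)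
    (v : (Fin n → ℝ) → ℝ) (hv0 : ∀ x, 0 ≤ v x) (hvlip : ∃ K, LipschitzWith K v) (hvper : ZPeriodic v)
    (P : Fin n → ℝ) (α q : ℝ) (hα : 0 ≤ α) (hq : 0 < q)
    (u m : (Fin n → ℝ) → ℝ) (H : ℝ)
    (h : PowerMFG v P α q u m H) :
    H = ∫ y in unitCube n,
      (((∑ i, (P i) ^ 2) - ∑ i, (pd i u y) ^ 2) / 2 * m y
        - α ^ q * (m y) ^ (q + 1) - v y * m y) :=
  power_mfg_energy_identity_general v P α q u m H h
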